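/- For any simple digraph G, the energy E(G) satisfies E(G) ≥ 2R(G), where R(G) is the directed Randic index. -/

import Mathlib

open Matrix Finset

noncomputable section

/-- For a real matrix, `A * Aᵀ` is positive semidefinite. -/
theorem mulTranspose_posSemidef {m k : Type*} [Fintype m] [Fintype k] (A : Matrix m k ℝ) :
    (A * Aᵀ).PosSemidef := by
  have h := Matrix.posSemidef_self_mul_conjTranspose A
  rwa [Matrix.conjTranspose_eq_transpose_of_trivial] at h

/-- For a real matrix, `Aᵀ * A` is positive semidefinite. -/
theorem transposeMul_posSemidef {m k : Type*} [Fintype m] [Fintype k] (A : Matrix m k ℝ) :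
    (Aᵀ * A).PosSemidef := by
  simpa using mulTranspose_posSemidef Aᵀ

/-- The positive semidefinite square root, as `Matrix.PosSemidef.sqrt` was defined in the older Mathlib. -/
def psdSqrt {n : Type*} [Fintype n] [DecidableEq n] {A : Matrix n n ℝ} (hA : A.PosSemidef) :
    Matrix n n ℝ :=
  hA.1.eigenvectorUnitary.1 * diagonal (RCLike.ofReal ∘ Real.sqrt ∘ hA.1.eigenvalues) *
    (star hA.1.eigenvectorUnitary : Matrix n n ℝ)

/-- `|A|⁺ = (A Aᵀ)^{1/2}` (psd square root). -/
def absPlus {V : Type*} [Fintype V] [DecidableEq V] (A : Matrix V V ℝ) : Matrix V V ℝ :=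
  psdSqrt (mulTranspose_posSemidef A)

/-- `|A|⁻ = (Aᵀ A)^{1/2}` (psd square root). -/
def absMinus {V : Type*} [Fintype V] [DecidableEq V] (A : Matrix V V ℝ) : Matrix V V ℝ :=
  psdSqrt (transposeMul_posSemidef A)

/-- The (Nikiforov) energy: `Tr((A Aᵀ)^{1/2})`, the sum of the singular values of `A`. -/
def energy {V : Type*} [Fintype V] [DecidableEq V] (A : Matrix V V ℝ) : ℝ := (absPlus A).trace

/-- 0-1 adjacency matrix of the digraph with edge relation `E`. -/
def adjMat {V : Type*} [Fintype V] [DecidableEq V] (E : V → V → Prop) [DecidableRel E] :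
    Matrix V V ℝ := Matrix.of fun i j => if E i j then 1 else 0

/-- Out-degree `d⁺(v)`. -/
def outDeg {V : Type*} [Fintype V] (E : V → V → Prop) [DecidableRel E] (v : V) : ℕ :=
  (univ.filter (fun w => E v w)).card

/-- In-degree `d⁻(w)`. -/
def inDeg {V : Type*} [Fintype V] (E : V → V → Prop) [DecidableRel E] (w : V) : ℕ :=
  (univ.filter (fun v => E v w)).card

/-- Directed Randic index `R(G) = (1/2) Σ_{(v,w)∈E} 1/√(d⁺(v) d⁻(w))`. -/
def randic {V : Type*} [Fintype V] (E : V → V → Prop) [DecidableRel E] : ℝ :=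
  (1/2) * ∑ v, ∑ w, if E v w then 1 / Real.sqrt (outDeg E v * inDeg E w) else 0

/-- Number of arcs of the digraph. -/
def numArcs {V : Type*} [Fintype V] (E : V → V → Prop) [DecidableRel E] : ℕ :=
  (univ.filter (fun p : V × V => E p.1 p.2)).card

/-- Maximum over vertices of in- and out-degrees, `Δ(G)`. -/
def maxDeg {V : Type*} [Fintype V] (E : V → V → Prop) [DecidableRel E] : ℕ :=
  univ.sup (fun v => max (outDeg E v) (inDeg E v))

namespace DGE

variable {V : Type*} [Fintype V] [DecidableEq V]

open scoped MatrixOrder in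
lemma psdSqrt_eq_cfc {n : Type*} [Fintype n] [DecidableEq n] {A : Matrix n n ℝ}
    (hA : A.PosSemidef) : psdSqrt hA = CFC.sqrt A := by
  unfold psdSqrt
  rw [CFC.sqrt_eq_real_sqrt A hA.nonneg, cfcₙ_eq_cfc (hf0 := Real.sqrt_zero), hA.1.cfc_eq,
    IsHermitian.cfc]
  simp [Unitary.conjStarAlgAut_apply]

open scoped MatrixOrder in
lemma psd_eq_psdSqrt_of_sq_eq {n : Type*} [Fintype n] [DecidableEq n] {M N : Matrix n n ℝ}
    (hN : N.PosSemidef) (hM : M.PosSemidef) (h : N ^ 2 = M) : N = psdSqrt hM := by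
  rw [psdSqrt_eq_cfc, ← h, CFC.sqrt_sq N hN.nonneg]

open scoped MatrixOrder in
lemma psdSqrt_posSemidef {n : Type*} [Fintype n] [DecidableEq n] {M : Matrix n n ℝ}
    (hM : M.PosSemidef) : (psdSqrt hM).PosSemidef := by
  rw [psdSqrt_eq_cfc]; exact (CFC.sqrt_nonneg M).posSemidef

/-- Functional calculus for a hermitian real matrix. -/
def specFun {M : Matrix V V ℝ} (h : M.IsHermitian) (f : ℝ → ℝ) : Matrix V V ℝ :=
  (h.eigenvectorUnitary : Matrix V V ℝ) * Matrix.diagonal (f ∘ h.eigenvalues) *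
    (star h.eigenvectorUnitary : Matrix V V ℝ)

lemma specFun_mul {M : Matrix V V ℝ} (h : M.IsHermitian) (f g : ℝ → ℝ) :
    specFun h f * specFun h g = specFun h (fun t => f t * g t) := by
  unfold specFun
  have h1 : (star h.eigenvectorUnitary : Matrix V V ℝ) * (h.eigenvectorUnitary : Matrix V V ℝ) = 1 :=
    Unitary.coe_star_mul_self _
  simp only [Matrix.mul_assoc]
  rw [← Matrix.mul_assoc (star h.eigenvectorUnitary : Matrix V V ℝ)
      (h.eigenvectorUnitary : Matrix V V ℝ), h1, Matrix.one_mul,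
    ← Matrix.mul_assoc (Matrix.diagonal (f ∘ h.eigenvalues)), Matrix.diagonal_mul_diagonal]
  rfl

lemma specFun_congr {M : Matrix V V ℝ} (h : M.IsHermitian) {f g : ℝ → ℝ}
    (hfg : ∀ i, f (h.eigenvalues i) = g (h.eigenvalues i)) : specFun h f = specFun h g := by
  have hfg' : f ∘ h.eigenvalues = g ∘ h.eigenvalues := funext fun i => hfg i
  unfold specFun
  rw [hfg']

lemma specFun_transpose {M : Matrix V V ℝ} (h : M.IsHermitian) (f : ℝ → ℝ) :
    (specFun h f)ᵀ = specFun h f := by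
  have : (specFun h f).IsHermitian := by
    unfold specFun
    rw [Matrix.star_eq_conjTranspose]
    exact Matrix.isHermitian_mul_mul_conjTranspose _ (Matrix.isHermitian_diagonal _)
  rw [← Matrix.conjTranspose_eq_transpose_of_trivial, this.eq]

lemma specFun_id {M : Matrix V V ℝ} (h : M.IsHermitian) : specFun h (fun t => t) = M := by
  conv_rhs => rw [h.spectral_theorem]
  unfold specFun
  congr 1

lemma trace_specFun {M : Matrix V V ℝ} (h : M.IsHermitian) (f : ℝ → ℝ) :
    (specFun h f).trace = ∑ i, f (h.eigenvalues i) := by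
  unfold specFun
  rw [Matrix.trace_mul_comm, ← Matrix.mul_assoc, Unitary.coe_star_mul_self, Matrix.one_mul,
    Matrix.trace_diagonal]
  rfl

lemma sqrt_eq_specFun {M : Matrix V V ℝ} (hM : M.PosSemidef) :
    psdSqrt hM = specFun hM.1 Real.sqrt := by
  unfold psdSqrt specFun
  congr 1


def e (t : ℝ) : ℝ := if t = 0 then 0 else 1
def kf (t : ℝ) : ℝ := (Real.sqrt (Real.sqrt t))⁻¹
def kk (t : ℝ) : ℝ := (Real.sqrt t)⁻¹
def rf (t : ℝ) : ℝ := Real.sqrt (Real.sqrt t)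

lemma e_mul_id (t : ℝ) : e t * t = t := by
  unfold e; by_cases h : t = 0 <;> simp [h]

lemma k_mul_k (t : ℝ) : kf t * kf t = kk t := by
  unfold kf kk
  rw [← mul_inv, Real.mul_self_sqrt (Real.sqrt_nonneg t)]

lemma r_mul_r (t : ℝ) : rf t * rf t = Real.sqrt t := by
  unfold rf; exact Real.mul_self_sqrt (Real.sqrt_nonneg t)

lemma sqrt_eq_zero_iff' {t : ℝ} (ht : 0 ≤ t) : Real.sqrt t = 0 ↔ t = 0 := by
  rw [Real.sqrt_eq_zero ht]

lemma r_mul_k {t : ℝ} (ht : 0 ≤ t) : rf t * kf t = e t := by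
  unfold rf kf e
  by_cases h : t = 0
  · simp [h]
  · have h1 : Real.sqrt t ≠ 0 := by rwa [Ne, sqrt_eq_zero_iff' ht]
    have h2 : Real.sqrt (Real.sqrt t) ≠ 0 := by
      rwa [Ne, sqrt_eq_zero_iff' (Real.sqrt_nonneg t)]
    simp [h, mul_inv_cancel₀ h2]

lemma kk_mul_id {t : ℝ} (ht : 0 ≤ t) : kk t * t = Real.sqrt t := by
  unfold kk
  by_cases h : t = 0
  · simp [h]
  · have h1 : Real.sqrt t ≠ 0 := by rwa [Ne, sqrt_eq_zero_iff' ht]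
    rw [inv_mul_eq_div, eq_comm, eq_div_iff h1, Real.mul_self_sqrt ht]

lemma kk_id_kk {t : ℝ} (ht : 0 ≤ t) : kk t * t * kk t = e t := by
  rw [kk_mul_id ht]
  unfold kk e
  by_cases h : t = 0
  · simp [h]
  · have h1 : Real.sqrt t ≠ 0 := by rwa [Ne, sqrt_eq_zero_iff' ht]
    simp [h, mul_inv_cancel₀ h1]


lemma diag_nonneg {V : Type*} [Fintype V] [DecidableEq V] {M : Matrix V V ℝ}
    (hM : M.PosSemidef) (v : V) : 0 ≤ M v v := by
  exact hM.diag_nonneg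

variable {V : Type*} [Fintype V] [DecidableEq V] (A : Matrix V V ℝ)

lemma eig_nonneg (i : V) : 0 ≤ (mulTranspose_posSemidef A).1.eigenvalues i :=
  (mulTranspose_posSemidef A).eigenvalues_nonneg i

lemma proj_eq : specFun (mulTranspose_posSemidef A).1 e * A = A := by
  set h := (mulTranspose_posSemidef A).1 with hh
  set P := specFun h e with hPdef
  have hMe : specFun h (fun t => t) = A * Aᵀ := specFun_id h
  have h1 : P * (A * Aᵀ) = A * Aᵀ := by
    calc P * (A * Aᵀ) = specFun h e * specFun h (fun t => t) := by rw [hMe]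
      _ = specFun h (fun t => e t * t) := specFun_mul h _ _
      _ = specFun h (fun t => t) := specFun_congr h fun i => e_mul_id _
      _ = A * Aᵀ := hMe
  have h2 : (A * Aᵀ) * P = A * Aᵀ := by
    calc (A * Aᵀ) * P = specFun h (fun t => t) * specFun h e := by rw [hMe]
      _ = specFun h (fun t => t * e t) := specFun_mul h _ _
      _ = specFun h (fun t => t) := specFun_congr h fun i => by rw [mul_comm]; exact e_mul_id _
      _ = A * Aᵀ := hMe
  have hPt : Pᵀ = P := specFun_transpose h e
  have hz : (P * A - A) * (P * A - A)ᵀ = 0 := by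
    rw [Matrix.transpose_sub, Matrix.transpose_mul, hPt]
    calc (P * A - A) * (Aᵀ * P - Aᵀ)
        = P * (A * Aᵀ) * P - P * (A * Aᵀ) - (A * Aᵀ) * P + A * Aᵀ := by noncomm_ring
      _ = 0 := by rw [h1, h2]; abel
  have hz2 : (P * A - A) * (P * A - A)ᴴ = 0 := by
    rwa [Matrix.conjTranspose_eq_transpose_of_trivial]
  have hz3 := Matrix.self_mul_conjTranspose_eq_zero.mp hz2
  exact sub_eq_zero.mp hz3

lemma BtB_eq :
    (specFun (mulTranspose_posSemidef A).1 kf * A)ᵀ * (specFun (mulTranspose_posSemidef A).1 kf * A)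
      = Aᵀ * (specFun (mulTranspose_posSemidef A).1 kk * A) := by
  set h := (mulTranspose_posSemidef A).1
  set K := specFun h kf with hK
  have hKt : Kᵀ = K := specFun_transpose h kf
  rw [Matrix.transpose_mul, hKt, Matrix.mul_assoc, ← Matrix.mul_assoc K K A, hK, specFun_mul]
  rw [specFun_congr h fun i => k_mul_k _]

lemma absMinus_eq :
    absMinus A = (specFun (mulTranspose_posSemidef A).1 kf * A)ᵀ *
      (specFun (mulTranspose_posSemidef A).1 kf * A) := by
  set h := (mulTranspose_posSemidef A).1 with hh
  set K := specFun h kf with hK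
  set B := K * A with hB
  have hMe : specFun h (fun t => t) = A * Aᵀ := specFun_id h
  have hmid : specFun h kk * (A * Aᵀ) * specFun h kk = specFun h e := by
    calc specFun h kk * (A * Aᵀ) * specFun h kk
        = specFun h kk * specFun h (fun t => t) * specFun h kk := by rw [hMe]
      _ = specFun h (fun t => kk t * t) * specFun h kk := by rw [specFun_mul]
      _ = specFun h (fun t => kk t * t * kk t) := specFun_mul h _ _
      _ = specFun h e := specFun_congr h fun i => kk_id_kk (eig_nonneg A i)
  have hsq : (Bᵀ * B) ^ 2 = Aᵀ * A := by
    rw [pow_two, BtB_eq A]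
    calc (Aᵀ * (specFun h kk * A)) * (Aᵀ * (specFun h kk * A))
        = Aᵀ * (specFun h kk * (A * Aᵀ) * specFun h kk) * A := by noncomm_ring
      _ = Aᵀ * specFun h e * A := by rw [hmid]
      _ = Aᵀ * (specFun h e * A) := by rw [Matrix.mul_assoc]
      _ = Aᵀ * A := by rw [proj_eq]
  exact (psd_eq_psdSqrt_of_sq_eq (transposeMul_posSemidef B) (transposeMul_posSemidef A) hsq).symm

lemma trace_absMinus : (absMinus A).trace = (absPlus A).trace := by
  set h := (mulTranspose_posSemidef A).1 with hh
  have hMe : specFun h (fun t => t) = A * Aᵀ := specFun_id h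
  have habs : absPlus A = specFun h Real.sqrt := sqrt_eq_specFun _
  rw [absMinus_eq A, BtB_eq A, Matrix.trace_mul_comm, Matrix.mul_assoc, habs]
  congr 1
  calc specFun h kk * (A * Aᵀ) = specFun h kk * specFun h (fun t => t) := by rw [hMe]
    _ = specFun h (fun t => kk t * t) := specFun_mul h _ _
    _ = specFun h Real.sqrt := specFun_congr h fun i => kk_mul_id (eig_nonneg A i)

lemma entry_sq_le (v w : V) : (A v w)^2 ≤ absPlus A v v * absMinus A w w := by
  set h := (mulTranspose_posSemidef A).1 with hh
  set K := specFun h kf with hK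
  set R := specFun h rf with hR
  set B := K * A with hB
  have hRK : R * B = A := by
    rw [hB, ← Matrix.mul_assoc, hR, hK, specFun_mul,
      specFun_congr h fun i => r_mul_k (eig_nonneg A i), proj_eq]
  have hAvw : A v w = ∑ j, R v j * B j w := by
    conv_lhs => rw [← hRK]
    rw [Matrix.mul_apply]
  have hCS := Finset.sum_mul_sq_le_sq_mul_sq Finset.univ (fun j => R v j) (fun j => B j w)
  have hRt : Rᵀ = R := specFun_transpose h rf
  have hP : ∑ j, (R v j)^2 = absPlus A v v := by
    have hRR : R * R = specFun h Real.sqrt := by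
      rw [hR, specFun_mul]; exact specFun_congr h fun i => r_mul_r _
    have habs : absPlus A = R * R := by rw [hRR]; exact sqrt_eq_specFun _
    rw [habs, Matrix.mul_apply]
    refine Finset.sum_congr rfl fun j _ => ?_
    have h5 : R j v = R v j := congrFun (congrFun hRt v) j
    rw [pow_two, h5]
  have hQ : ∑ j, (B j w)^2 = absMinus A w w := by
    rw [absMinus_eq A, Matrix.mul_apply]
    exact Finset.sum_congr rfl fun j _ => by rw [pow_two]; rfl
  calc (A v w)^2 = (∑ j, R v j * B j w)^2 := by rw [hAvw]
    _ ≤ (∑ j, (R v j)^2) * (∑ j, (B j w)^2) := hCS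
    _ = absPlus A v v * absMinus A w w := by rw [hP, hQ]

end DGE

namespace DGE

lemma edge_bound {dp dm p q : ℝ} (hdp : 1 ≤ dp) (hdm : 1 ≤ dm) (hp : 0 ≤ p) (hq : 0 ≤ q)
    (hpq : 1 ≤ p * q) :
    1 / Real.sqrt (dp * dm) ≤ p / (2 * dp) + q / (2 * dm) := by
  have hdp0 : (0:ℝ) < dp := lt_of_lt_of_le one_pos hdp
  have hdm0 : (0:ℝ) < dm := lt_of_lt_of_le one_pos hdm
  set a := p / dp with ha
  set b := q / dm with hb
  have ha0 : 0 ≤ a := div_nonneg hp hdp0.le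
  have hb0 : 0 ≤ b := div_nonneg hq hdm0.le
  have hab : 1 / (dp * dm) ≤ a * b := by
    rw [ha, hb, div_mul_div_comm]
    exact div_le_div_of_nonneg_right hpq (by positivity) |>.trans_eq rfl
  calc 1 / Real.sqrt (dp * dm) = Real.sqrt (1 / (dp * dm)) := by
        rw [one_div, one_div, Real.sqrt_inv]
    _ ≤ Real.sqrt (a * b) := Real.sqrt_le_sqrt hab
    _ = Real.sqrt a * Real.sqrt b := Real.sqrt_mul ha0 b
    _ ≤ (a + b) / 2 := by
        nlinarith [sq_nonneg (Real.sqrt a - Real.sqrt b), Real.sq_sqrt ha0, Real.sq_sqrt hb0,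
          Real.sqrt_nonneg a, Real.sqrt_nonneg b]
    _ = p / (2 * dp) + q / (2 * dm) := by rw [ha, hb]; field_simp

end DGE

/-- For any simple digraph, `E(G) ≥ 2 R(G)`. -/
theorem stmt_3 {n : ℕ} (E : Fin n → Fin n → Prop) [DecidableRel E]
    (hloop : ∀ v, ¬ E v v) :
    2 * randic E ≤ energy (adjMat E) := by
  classical
  set A := adjMat E with hA
  set P := absPlus A with hP
  set Q := absMinus A with hQ
  have hPpsd : P.PosSemidef := DGE.psdSqrt_posSemidef (mulTranspose_posSemidef A)
  have hQpsd : Q.PosSemidef := DGE.psdSqrt_posSemidef (transposeMul_posSemidef A)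
  have hPd : ∀ v, 0 ≤ P v v := fun v => DGE.diag_nonneg hPpsd v
  have hQd : ∀ v, 0 ≤ Q v v := fun v => DGE.diag_nonneg hQpsd v
  have key : ∀ v w, E v w → 1 ≤ P v v * Q w w := by
    intro v w hvw
    have h1 := DGE.entry_sq_le A v w
    have h2 : A v w = 1 := by simp [hA, adjMat, hvw]
    rw [h2] at h1
    simpa using h1
  have hout : ∀ v w, E v w → 1 ≤ (outDeg E v : ℝ) := by
    intro v w hvw
    have : 0 < outDeg E v :=
      Finset.card_pos.mpr ⟨w, Finset.mem_filter.mpr ⟨Finset.mem_univ w, hvw⟩⟩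
    exact_mod_cast this
  have hin : ∀ v w, E v w → 1 ≤ (inDeg E w : ℝ) := by
    intro v w hvw
    have : 0 < inDeg E w :=
      Finset.card_pos.mpr ⟨v, Finset.mem_filter.mpr ⟨Finset.mem_univ v, hvw⟩⟩
    exact_mod_cast this
  have part1 : (∑ v, ∑ w, if E v w then P v v / (2 * (outDeg E v : ℝ)) else 0) ≤ P.trace / 2 := by
    have inner1 : ∀ v : Fin n, (∑ w, if E v w then P v v / (2 * (outDeg E v : ℝ)) else 0)
        ≤ P v v / 2 := by
      intro v
      rw [← Finset.sum_filter, Finset.sum_const]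
      by_cases hd : outDeg E v = 0
      · rw [show (univ.filter (fun w => E v w)).card = outDeg E v from rfl, hd]
        simp
        exact div_nonneg (hPd v) (by norm_num)
      · rw [show (univ.filter (fun w => E v w)).card = outDeg E v from rfl, nsmul_eq_mul]
        have hdne : (outDeg E v : ℝ) ≠ 0 := Nat.cast_ne_zero.mpr hd
        apply le_of_eq
        field_simp
    calc (∑ v, ∑ w, if E v w then P v v / (2 * (outDeg E v : ℝ)) else 0)
        ≤ ∑ v, P v v / 2 := Finset.sum_le_sum fun v _ => inner1 v
      _ = P.trace / 2 := by rw [Matrix.trace, ← Finset.sum_div]; rfl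
  have part2 : (∑ v, ∑ w, if E v w then Q w w / (2 * (inDeg E w : ℝ)) else 0) ≤ Q.trace / 2 := by
    rw [Finset.sum_comm]
    have inner2 : ∀ w : Fin n, (∑ v, if E v w then Q w w / (2 * (inDeg E w : ℝ)) else 0)
        ≤ Q w w / 2 := by
      intro w
      rw [← Finset.sum_filter, Finset.sum_const]
      by_cases hd : inDeg E w = 0
      · rw [show (univ.filter (fun v => E v w)).card = inDeg E w from rfl, hd]
        simp
        exact div_nonneg (hQd w) (by norm_num)
      · rw [show (univ.filter (fun v => E v w)).card = inDeg E w from rfl, nsmul_eq_mul]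
        have hdne : (inDeg E w : ℝ) ≠ 0 := Nat.cast_ne_zero.mpr hd
        apply le_of_eq
        field_simp
    calc (∑ w, ∑ v, if E v w then Q w w / (2 * (inDeg E w : ℝ)) else 0)
        ≤ ∑ w, Q w w / 2 := Finset.sum_le_sum fun w _ => inner2 w
      _ = Q.trace / 2 := by rw [Matrix.trace, ← Finset.sum_div]; rfl
  have main : (∑ v, ∑ w, if E v w then 1 / Real.sqrt ((outDeg E v : ℝ) * (inDeg E w : ℝ)) else 0)
      ≤ P.trace := by
    have step1 : ∀ v w : Fin n, (if E v w then (1:ℝ) / Real.sqrt ((outDeg E v : ℝ) * (inDeg E w : ℝ)) else 0)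
        ≤ (if E v w then P v v / (2 * (outDeg E v : ℝ)) else 0)
          + (if E v w then Q w w / (2 * (inDeg E w : ℝ)) else 0) := by
      intro v w
      by_cases hvw : E v w
      · simp only [hvw, if_true]
        exact DGE.edge_bound (hout v w hvw) (hin v w hvw) (hPd v) (hQd w) (key v w hvw)
      · simp [hvw]
    calc (∑ v, ∑ w, if E v w then 1 / Real.sqrt ((outDeg E v : ℝ) * (inDeg E w : ℝ)) else 0)
        ≤ ∑ v, ∑ w, ((if E v w then P v v / (2 * (outDeg E v : ℝ)) else 0)
            + (if E v w then Q w w / (2 * (inDeg E w : ℝ)) else 0)) :=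
          Finset.sum_le_sum fun v _ => Finset.sum_le_sum fun w _ => step1 v w
      _ = (∑ v, ∑ w, if E v w then P v v / (2 * (outDeg E v : ℝ)) else 0)
            + (∑ v, ∑ w, if E v w then Q w w / (2 * (inDeg E w : ℝ)) else 0) := by
          simp [Finset.sum_add_distrib]
      _ ≤ P.trace / 2 + Q.trace / 2 := add_le_add part1 part2
      _ = P.trace := by rw [hQ, hP, DGE.trace_absMinus A]; ring
  have henergy : energy A = P.trace := rfl
  rw [randic, henergy]
  linarith [main]
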